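/- arXiv:2512.04253 — 4 statements merged into one kernel-verified Lean document; each statement's English description precedes it below -/
import Mathlib

section
/- Let f(u), g(u) ∈ k[u] be monic polynomials over an algebraically closed field k of characteristic 0. If f(u+1)·g(u) = g(u+1)·f(u) (i.e. f(u+1)/f(u) = g(u+1)/g(u) as rational functions), then f = g. -/
open Polynomial

/-- If every root of `f` shifted by 1 is again a root, and `f` has a root, then `f = 0`. -/
lemma exists_maximal_root {k : Type*} [Field k] [CharZero k] {f : Polynomial k}
    (hf : f ≠ 0) {α : k} (hα : f.IsRoot α) :
    ∃ β, f.IsRoot β ∧ ¬ f.IsRoot (β + 1) := by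
  by_contra hcon
  push_neg at hcon
  have hall : ∀ m : ℕ, f.IsRoot (α + m) := by
    intro m
    induction m with
    | zero => simpa using hα
    | succ n ih =>
      have h2 : α + ((n+1 : ℕ) : k) = (α + n) + 1 := by push_cast; ring
      rw [h2]
      exact hcon _ ih
  have hfin : {x | f.IsRoot x}.Finite := Polynomial.finite_setOf_isRoot hf
  have hinj : Function.Injective (fun m : ℕ => α + (m : k)) := by
    intro a b hab
    simp only [add_right_injective] at hab
    exact_mod_cast add_left_cancel hab
  exact (Set.infinite_of_injective_forall_mem hinj hall) hfin

lemma aux_ind {k : Type*} [Field k] [IsAlgClosed k] [CharZero k] :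
    ∀ n (f g : Polynomial k), f.natDegree = n → f.Monic → g.Monic →
      f.comp (Polynomial.X + 1) * g = g.comp (Polynomial.X + 1) * f → f = g := by
  intro n
  induction n using Nat.strong_induction_on with
  | _ n ih =>
  intro f g hn hf hg h
  by_cases hroot : ∃ α, f.IsRoot α
  · obtain ⟨α₀, hα₀⟩ := hroot
    obtain ⟨α, hα, hα1⟩ := exists_maximal_root hf.ne_zero hα₀
    -- g(α) = 0
    have hgα : g.IsRoot α := by
      have := congrArg (Polynomial.eval α) h
      simp only [eval_mul, eval_comp, eval_add, eval_X, eval_one] at this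
      rw [hα.eq_zero, mul_zero] at this
      rcases mul_eq_zero.mp this with h1 | h1
      · exact absurd h1 hα1
      · exact h1
    obtain ⟨f1, hf1⟩ : (X - C α) ∣ f := dvd_iff_isRoot.mpr hα
    obtain ⟨g1, hg1⟩ : (X - C α) ∣ g := dvd_iff_isRoot.mpr hgα
    have hmX : (X - C α : Polynomial k).Monic := monic_X_sub_C α
    have hf1m : f1.Monic := hmX.of_mul_monic_left (hf1 ▸ hf)
    have hg1m : g1.Monic := hmX.of_mul_monic_left (hg1 ▸ hg)
    have hdeg : f1.natDegree < n := by
      have : f.natDegree = f1.natDegree + 1 := by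
        rw [hf1, natDegree_mul hmX.ne_zero hf1m.ne_zero, natDegree_X_sub_C, add_comm]
      omega
    have hrel : f1.comp (X + 1) * g1 = g1.comp (X + 1) * f1 := by
      have hne : ((X - C α + 1) * (X - C α) : Polynomial k) ≠ 0 := by
        apply mul_ne_zero
        · have heq : (X - C α + 1 : Polynomial k) = X - C (α - 1) := by
            rw [C_sub, C_1]; ring
          rw [heq]
          exact (monic_X_sub_C (α - 1)).ne_zero
        · exact hmX.ne_zero
      apply mul_left_cancel₀ hne
      have := h
      rw [hf1, hg1] at this
      simp only [mul_comp, sub_comp, X_comp, C_comp] at this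
      ring_nf at this ⊢
      linear_combination this
    have : f1 = g1 := ih f1.natDegree hdeg f1 g1 rfl hf1m hg1m hrel
    rw [hf1, hg1, this]
  · push_neg at hroot
    have hf0 : f.natDegree = 0 := by
      by_contra hne
      obtain ⟨α, hα⟩ := IsAlgClosed.exists_root f (by
        intro hdeg
        exact hne (natDegree_eq_zero_iff_degree_le_zero.mpr (le_of_eq hdeg)) )
      exact (hroot α) hα
    have hf1 : f = 1 := hf.natDegree_eq_zero.mp hf0
    subst hf1
    simp only [one_comp, one_mul, mul_one] at h
    -- h : g = g.comp (X+1)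
    have hg0 : g.natDegree = 0 := by
      by_contra hne
      obtain ⟨α, hα⟩ := IsAlgClosed.exists_root g (by
        intro hdeg
        exact hne (natDegree_eq_zero_iff_degree_le_zero.mpr (le_of_eq hdeg)))
      obtain ⟨β, hβ, hβ1⟩ := exists_maximal_root hg.ne_zero hα
      apply hβ1
      have := congrArg (Polynomial.eval β) h
      simp only [eval_comp, eval_add, eval_X, eval_one] at this
      unfold Polynomial.IsRoot
      rw [← this]
      exact hβ
    exact (hg.natDegree_eq_zero.mp hg0).symm

/-- If `f, g` are monic polynomials over an algebraically closed field of characteristic 0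
and `f(u+1)/f(u) = g(u+1)/g(u)` as rational functions (cleared of denominators), then `f = g`. -/
theorem monic_eq_of_shift_ratio_eq {k : Type*} [Field k] [IsAlgClosed k] [CharZero k]
    (f g : Polynomial k) (hf : f.Monic) (hg : g.Monic)
    (h : f.comp (Polynomial.X + 1) * g = g.comp (Polynomial.X + 1) * f) :
    f = g :=
  aux_ind f.natDegree f g rfl hf hg h
end

section
/- Let p_{<d}(x₁,…,x_r) := p̃_d(x₁,…,x_r) - p_d(x₁,…,x_r) be the difference of the deformed power sum and the ordinary power sum. Then for d ≥ 1 the recursion p_{<d} = C(r, d+1) + ∑_{i=1}^{d-1} (-1)^{i-1} · [ p_{<(d-i)} - C(r-i, d+1-i) ] · e_i(x₁,…,x_r) holds, where C denotes binomial coefficients and e_i the elementary symmetric polynomials. -/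
/-!
Write `E(t) = ∏ᵢ (1 - xᵢ t) = ∑ₖ (-1)ᵏ eₖ tᵏ` and
`F(t) = ∏ᵢ ((1 + t) - xᵢ t) = ∑ₖ (-1)ᵏ eₖ tᵏ (1 + t)^(r-k)`,
so that `[t^m] F = ∑_{k ≤ m} (-1)ᵏ eₖ C(r-k, m-k)`.
Comparing coefficients of `t^(d+1)` in `(1 + t ∑ₙ p̃ₙ tⁿ) E = F` gives
`∑_{j ≤ d} (-1)ʲ eⱼ (p̃_{d-j} - C(r-j, d+1-j)) = 0`. Newton's identity
`∑_{j < d} (-1)ʲ eⱼ p_{d-j} = (-1)^(d+1) d e_d` cancels the ordinary power sums against the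
`j = d` term, which is `(-1)ᵈ e_d (r - (r - d))` because `p̃₀ = r`. What remains is
`∑_{j < d} (-1)ʲ eⱼ (p_{<(d-j)} - C(r-j, d+1-j)) = 0`, and its `j = 0` term isolates `p_{<d}`.
-/

open MvPolynomial Finset

namespace PowerSeries

variable {A : Type*} [Semiring A]

lemma coeff_one_add_X_pow (k n : ℕ) :
    coeff n ((1 + X : PowerSeries A) ^ k) = (k.choose n : A) := by
  rw [← Polynomial.coeff_one_add_X_pow, ← Polynomial.coeff_coe]
  simp

lemma mk_ite_eq_one_add_X_mul_mk (a : ℕ → A) :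
    mk (fun n => if n = 0 then 1 else a (n - 1)) = 1 + X * mk a := by
  ext (_ | n) <;> simp [coeff_succ_X_mul]

end PowerSeries

namespace MvPolynomial

variable {σ R : Type*} [Fintype σ]

section CommSemiring

variable [CommSemiring R]

lemma esymm_eq_zero_of_card_lt {k : ℕ} (hk : Fintype.card σ < k) : esymm σ R k = 0 := by
  rw [esymm, powersetCard_eq_empty.mpr (by simpa using hk), sum_empty]

lemma prod_add_map_X_mul_eq_sum_esymm {A : Type*} [CommSemiring A]
    (f : MvPolynomial σ R →+* A) (g c : A) :
    ∏ i, (g + f (X i) * c) =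
      ∑ j ∈ range (Fintype.card σ + 1),
        f (esymm σ R j) * c ^ j * g ^ (Fintype.card σ - j) := by
  set ψ : MvPolynomial σ R →+* A := eval₂Hom (f.comp C) fun i => f (X i) * c
  have hψ (j : ℕ) : ψ (esymm σ R j) = f (esymm σ R j) * c ^ j := by
    simp only [esymm, map_sum, map_prod, sum_mul]
    refine sum_congr rfl fun s hs => ?_
    simp [ψ, prod_mul_distrib, (mem_powersetCard.mp hs).2]
  have hvieta := congrArg (Polynomial.eval₂ ψ g) (prod_C_add_X_eq_sum_esymm R σ)
  simpa [Polynomial.eval₂_finsetProd, Polynomial.eval₂_finsetSum, hψ, ψ, add_comm]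
    using hvieta

lemma sum_range_card_succ_ite_esymm_mul (m : ℕ) (u : ℕ → MvPolynomial σ R) :
    ∑ j ∈ range (Fintype.card σ + 1), (if j ≤ m then esymm σ R j * u j else 0) =
      ∑ j ∈ range (m + 1), esymm σ R j * u j := by
  rw [← sum_filter]
  refine sum_subset (fun j hj => ?_) fun j hjm hj => ?_
  · simp only [mem_filter, mem_range] at hj ⊢
    omega
  · simp only [mem_filter, mem_range, not_and, not_le] at hj hjm
    rw [esymm_eq_zero_of_card_lt (by omega), zero_mul]

end CommSemiring

section CommRing

variable [CommRing R]

lemma esymm_mul_natCast_card_sub (k : ℕ) :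
    esymm σ R k * ((Fintype.card σ - k : ℕ) : MvPolynomial σ R) =
      esymm σ R k * (Fintype.card σ - k) := by
  rcases le_or_gt k (Fintype.card σ) with hk | hk
  · rw [Nat.cast_sub hk]
  · rw [esymm_eq_zero_of_card_lt hk, zero_mul, zero_mul]

lemma sum_range_neg_one_pow_mul_esymm_mul_psum (k : ℕ) :
    ∑ i ∈ range k, (-1) ^ i * esymm σ R i * psum σ R (k - i) =
      (-1) ^ (k + 1) * k * esymm σ R k := by
  have hsum : ∑ a ∈ antidiagonal k with a.1 < k, (-1) ^ a.1 * esymm σ R a.1 * psum σ R a.2 =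
      ∑ i ∈ range k, (-1) ^ i * esymm σ R i * psum σ R (k - i) := by
    rw [sum_filter, Nat.sum_antidiagonal_eq_sum_range_succ_mk, sum_range_succ,
      if_neg (lt_irrefl k), add_zero]
    exact sum_congr rfl fun i hi => if_pos (mem_range.mp hi)
  have hsq : ((-1 : MvPolynomial σ R) ^ (k + 1)) ^ 2 = 1 := by
    rw [← pow_mul, mul_comm, pow_mul, neg_one_sq, one_pow]
  rw [mul_assoc, mul_esymm_eq_sum, ← hsum, ← mul_assoc, ← sq, hsq, one_mul]

lemma coeff_prod_one_sub_C_X_mul_X (n : ℕ) :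
    PowerSeries.coeff n (∏ i, (1 - PowerSeries.C (X i : MvPolynomial σ R) * PowerSeries.X)) =
      (-1) ^ n * esymm σ R n := by
  have hfactor (i : σ) : 1 - PowerSeries.C (X i : MvPolynomial σ R) * PowerSeries.X =
      1 + PowerSeries.C (X i) * (PowerSeries.C (-1) * PowerSeries.X) := by
    rw [map_neg, map_one]; ring
  rw [prod_congr rfl fun i _ => hfactor i, prod_add_map_X_mul_eq_sum_esymm, map_sum]
  simp_rw [one_pow, mul_one, mul_pow, ← map_pow, ← mul_assoc, ← map_mul,
    PowerSeries.coeff_C_mul_X_pow, sum_ite_eq, mem_range]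
  split_ifs with hn
  · ring
  · rw [esymm_eq_zero_of_card_lt (by omega), mul_zero]

lemma coeff_prod_one_add_C_one_sub_X_mul_X (n : ℕ) :
    PowerSeries.coeff n (∏ i, (1 + PowerSeries.C (1 - X i : MvPolynomial σ R) * PowerSeries.X)) =
      ∑ j ∈ range (n + 1),
        (-1) ^ j * esymm σ R j * ((Fintype.card σ - j).choose (n - j) : ℕ) := by
  have hfactor (i : σ) : 1 + PowerSeries.C (1 - X i : MvPolynomial σ R) * PowerSeries.X =
      (1 + PowerSeries.X) + PowerSeries.C (X i) * (PowerSeries.C (-1) * PowerSeries.X) := by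
    rw [map_sub, map_neg, map_one]; ring
  rw [prod_congr rfl fun i _ => hfactor i, prod_add_map_X_mul_eq_sum_esymm, map_sum]
  trans ∑ j ∈ range (Fintype.card σ + 1), if j ≤ n then
    esymm σ R j * ((-1) ^ j * ((Fintype.card σ - j).choose (n - j) : ℕ)) else 0
  · refine sum_congr rfl fun j _ => ?_
    have hterm : PowerSeries.C (esymm σ R j) * (PowerSeries.C (-1) * PowerSeries.X) ^ j *
        (1 + PowerSeries.X) ^ (Fintype.card σ - j) = PowerSeries.C (esymm σ R j * (-1) ^ j) *
          (PowerSeries.X ^ j * (1 + PowerSeries.X) ^ (Fintype.card σ - j)) := by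
      rw [map_mul, map_pow]; ring
    rw [hterm, PowerSeries.coeff_C_mul, PowerSeries.coeff_X_pow_mul',
      PowerSeries.coeff_one_add_X_pow]
    split_ifs <;> ring
  · rw [sum_range_card_succ_ite_esymm_mul]
    exact sum_congr rfl fun j _ => by ring

/-- `P n` plays the role of `p̃ₙ` in
`1 + ∑ₙ p̃ₙ u^(-n-1) = ∏ᵢ (u + 1 - xᵢ) / (u - xᵢ)`
with `t = u⁻¹` and the denominators cleared. -/
def IsDeformedPowerSum (P : ℕ → MvPolynomial σ R) : Prop :=
  PowerSeries.mk (fun n => if n = 0 then 1 else P (n - 1)) *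
      ∏ i, (1 - PowerSeries.C (X i : MvPolynomial σ R) * PowerSeries.X) =
    ∏ i, (1 + PowerSeries.C (1 - X i : MvPolynomial σ R) * PowerSeries.X)

namespace IsDeformedPowerSum

variable {P : ℕ → MvPolynomial σ R}

lemma sum_range_neg_one_pow_mul_esymm_mul_sub_choose (hP : IsDeformedPowerSum P) (n : ℕ) :
    ∑ j ∈ range (n + 1), (-1) ^ j * esymm σ R j *
      (P (n - j) - ((Fintype.card σ - j).choose (n + 1 - j) : ℕ)) = 0 := by
  have hcoeff := congrArg (PowerSeries.coeff (n + 1)) hP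
  rw [PowerSeries.mk_ite_eq_one_add_X_mul_mk, add_mul, one_mul, map_add, mul_assoc,
    PowerSeries.coeff_succ_X_mul, mul_comm, PowerSeries.coeff_mul,
    Nat.sum_antidiagonal_eq_sum_range_succ
      (fun a b => PowerSeries.coeff a _ * PowerSeries.coeff b _),
    coeff_prod_one_add_C_one_sub_X_mul_X, sum_range_succ _ (n + 1)] at hcoeff
  simp only [coeff_prod_one_sub_C_X_mul_X, PowerSeries.coeff_mk, Nat.sub_self,
    Nat.choose_zero_right, Nat.cast_one, mul_one] at hcoeff
  simp_rw [mul_sub, sum_sub_distrib]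
  linear_combination hcoeff

lemma apply_zero (hP : IsDeformedPowerSum P) : P 0 = Fintype.card σ := by
  simpa [sub_eq_zero] using hP.sum_range_neg_one_pow_mul_esymm_mul_sub_choose 0

lemma sum_range_neg_one_pow_mul_esymm_mul_sub_psum_sub_choose (hP : IsDeformedPowerSum P)
    (d : ℕ) :
    ∑ j ∈ range d, (-1) ^ j * esymm σ R j *
      (P (d - j) - psum σ R (d - j) - ((Fintype.card σ - j).choose (d + 1 - j) : ℕ)) = 0 := by
  have hcoeff := hP.sum_range_neg_one_pow_mul_esymm_mul_sub_choose d
  rw [sum_range_succ, Nat.sub_self, hP.apply_zero, Nat.add_sub_cancel_left,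
    Nat.choose_one_right] at hcoeff
  have hnewton := sum_range_neg_one_pow_mul_esymm_mul_psum (σ := σ) (R := R) d
  have hsplit : ∑ j ∈ range d, (-1) ^ j * esymm σ R j *
      (P (d - j) - psum σ R (d - j) - ((Fintype.card σ - j).choose (d + 1 - j) : ℕ)) =
      ∑ j ∈ range d, (-1) ^ j * esymm σ R j *
        (P (d - j) - ((Fintype.card σ - j).choose (d + 1 - j) : ℕ)) -
      ∑ j ∈ range d, (-1) ^ j * esymm σ R j * psum σ R (d - j) := by
    rw [← sum_sub_distrib]
    exact sum_congr rfl fun j _ => by ring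
  rw [hsplit]
  linear_combination
    hcoeff - hnewton + (-1) ^ d * esymm_mul_natCast_card_sub (σ := σ) (R := R) d

end IsDeformedPowerSum

end CommRing

end MvPolynomial

/-- Let `p̃_d` be the deformed power sums, defined by
`1 + ∑_{d≥0} p̃_d u^{-d-1} = ∏_{i=1}^r (u+1-x_i)/(u-x_i)` (expressed below with `t = u⁻¹`
and denominators cleared), and let `p_{<d} := p̃_d - p_d` be the difference with the
ordinary power sum `p_d = ∑ᵢ xᵢ^d`.  Then for `d ≥ 1` the recursion
`p_{<d} = C(r, d+1) + ∑_{i=1}^{d-1} (-1)^{i-1} [p_{<(d-i)} - C(r-i, d+1-i)] e_i` holds. -/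
theorem deformed_power_sum_recursion (r : ℕ)
    (P : ℕ → MvPolynomial (Fin r) ℚ)
    (h : (PowerSeries.mk (fun n => if n = 0 then 1 else P (n - 1))) *
          ∏ i : Fin r, (1 - PowerSeries.C (R := MvPolynomial (Fin r) ℚ) (X i) * PowerSeries.X) =
        ∏ i : Fin r, (1 + PowerSeries.C (R := MvPolynomial (Fin r) ℚ) (1 - X i) * PowerSeries.X)) :
    ∀ d : ℕ, 1 ≤ d →
      P d - ∑ i : Fin r, X i ^ d =
        ((r.choose (d + 1) : ℕ) : MvPolynomial (Fin r) ℚ) +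
        ∑ i ∈ Finset.Icc 1 (d - 1),
          (-1 : MvPolynomial (Fin r) ℚ) ^ (i - 1) *
            ((P (d - i) - ∑ j : Fin r, X j ^ (d - i)) -
              (((r - i).choose (d + 1 - i) : ℕ) : MvPolynomial (Fin r) ℚ)) *
            esymm (Fin r) ℚ i := by
  intro d hd
  obtain ⟨n, rfl⟩ := Nat.exists_eq_add_of_le' hd
  have key :=
    IsDeformedPowerSum.sum_range_neg_one_pow_mul_esymm_mul_sub_psum_sub_choose h (n + 1)
  rw [sum_range_succ', Fintype.card_fin] at key
  rw [← Ico_add_one_right_eq_Icc, sum_Ico_eq_sum_range, Nat.add_sub_cancel]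
  simp only [psum, add_comm 1, Nat.add_sub_cancel, Nat.add_sub_add_right, pow_zero, esymm_zero,
    Nat.sub_zero, one_mul, pow_succ (-1 : MvPolynomial (Fin r) ℚ), mul_neg_one, neg_mul,
    sum_neg_distrib] at key ⊢
  simp_rw [mul_right_comm _ _ (esymm _ _ _)]
  linear_combination key
end

section
/- The operators σ_i on k[x₁,…,x_r] defined by σ_i(f) = s_i(f) + ∂_i(f), where s_i swaps x_i and x_{i+1} and ∂_i is the Demazure operator, satisfy the Coxeter relations of the symmetric group: σ_i² = id, σ_i σ_{i+1} σ_i = σ_{i+1} σ_i σ_{i+1}, and σ_i σ_j = σ_j σ_i for |i-j| > 1. Hence they define an action (the deformed or 'diamond' action) of S_r on k[x₁,…,x_r]. -/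
/-!
Writing `p = xᵢ - xᵢ₊₁`, the operator `σᵢ = sᵢ + (1 - sᵢ)/p` is pinned down by
`p · σᵢ f = f + (p - 1) · sᵢ f`, because `p` is a non-zero-divisor; so every relation can be
checked after clearing denominators. For the braid relation with `q = xᵢ₊₁ - xᵢ₊₂` one finds
`p q (p + q) · σᵢ σᵢ₊₁ σᵢ f = Σ_w c_w(p, q) · w f`, a sum over the six permutations of
`xᵢ, xᵢ₊₁, xᵢ₊₂` whose coefficients are invariant under `(sᵢ, p) ↔ (sᵢ₊₁, q)`, hence it equals
`p q (p + q) · σᵢ₊₁ σᵢ σᵢ₊₁ f`. The other two relations are shorter computations of the same kind.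
-/

open MvPolynomial

section DeformedReflection

variable {A : Type*} [CommRing A]

/-- `T = s + (1 - s) / p`, with the division cleared. -/
def IsDeformedReflection (s : A →+* A) (p : A) (T : A → A) : Prop :=
  ∀ f, p * (T f - s f) = f - s f

namespace IsDeformedReflection

variable {s s₁ s₂ : A →+* A} {p q : A} {T T₁ T₂ : A → A}

theorem mul_apply (h : IsDeformedReflection s p T) (f : A) : p * T f = f + (p - 1) * s f := by
  linear_combination h f

theorem map_apply (h : IsDeformedReflection s p T) (hp : IsLeftRegular p)
    (hs : ∀ x, s (s x) = x) (hsp : s p = -p) (f : A) : s (T f) = T f + f - s f := by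
  have hs_eq := congrArg s (h f)
  simp only [map_mul, map_sub, hs, hsp] at hs_eq
  apply hp
  linear_combination -hs_eq - h f

theorem apply_apply (h : IsDeformedReflection s p T) (hp : IsLeftRegular p)
    (hs : ∀ x, s (s x) = x) (hsp : s p = -p) (f : A) : T (T f) = f := by
  apply hp
  linear_combination h (T f) + (p - 1) * h.map_apply hp hs hsp f + h f

theorem map_apply_of_commute (h : IsDeformedReflection s p T) (hp : IsLeftRegular p)
    {t : A →+* A} (hts : ∀ x, t (s x) = s (t x)) (htp : t p = p) (f : A) :
    t (T f) = T (t f) := by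
  have ht_eq := congrArg t (h f)
  simp only [map_mul, map_sub, hts, htp] at ht_eq
  apply hp
  linear_combination ht_eq - h (t f)

theorem mul_mul_apply_apply_of_commute (h₁ : IsDeformedReflection s₁ p T₁)
    (h₂ : IsDeformedReflection s₂ q T₂) (hq : IsLeftRegular q)
    (hs : ∀ x, s₁ (s₂ x) = s₂ (s₁ x)) (hs₁q : s₁ q = q) (f : A) :
    p * q * T₁ (T₂ f) = f + (p - 1) * s₁ f + (q - 1) * s₂ f + (p - 1) * (q - 1) * s₁ (s₂ f) := by
  have hcomm := h₂.map_apply_of_commute hq hs hs₁q f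
  linear_combination q * h₁.mul_apply (T₂ f) + (p - 1) * q * hcomm + h₂.mul_apply f
    + (p - 1) * h₂.mul_apply (s₁ f) - (p - 1) * (q - 1) * hs f

theorem commute (h₁ : IsDeformedReflection s₁ p T₁) (h₂ : IsDeformedReflection s₂ q T₂)
    (hp : IsLeftRegular p) (hq : IsLeftRegular q) (hs : ∀ x, s₁ (s₂ x) = s₂ (s₁ x))
    (hs₁q : s₁ q = q) (hs₂p : s₂ p = p) (f : A) : T₁ (T₂ f) = T₂ (T₁ f) := by
  apply hp.mul hq
  linear_combination h₁.mul_mul_apply_apply_of_commute h₂ hq hs hs₁q f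
    - h₂.mul_mul_apply_apply_of_commute h₁ hp (fun x => (hs x).symm) hs₂p f
    + (p - 1) * (q - 1) * hs f

theorem mul_mul_mul_apply_apply_apply (h₁ : IsDeformedReflection s₁ p T₁)
    (h₂ : IsDeformedReflection s₂ q T₂) (hp : IsLeftRegular p) (hs₁ : ∀ x, s₁ (s₁ x) = x)
    (hs₁p : s₁ p = -p) (hs₁q : s₁ q = p + q) (hs₂p : s₂ p = p + q) (f : A) :
    p * q * (p + q) * T₁ (T₂ (T₁ f)) =
      (1 + p * q) * f + (p - 1) * s₁ f + (q - 1) * s₂ f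
        + (p - 1) * (p + q - 1) * s₁ (s₂ f) + (q - 1) * (p + q - 1) * s₂ (s₁ f)
        + (p - 1) * (q - 1) * (p + q - 1) * s₁ (s₂ (s₁ f)) := by
  have e₁ := h₁.mul_apply f
  have e₁' := h₁.map_apply hp hs₁ hs₁p f
  have e₂ := h₂.mul_apply (T₁ f)
  have e₂' := congrArg s₂ e₁
  have e₃ := h₁.mul_apply (T₂ (T₁ f))
  have e₃' := congrArg s₁ e₂
  have e₄ := congrArg (fun x => s₁ (s₂ x)) e₁
  simp only [map_mul, map_add, map_sub, map_one, hs₁p, hs₁q, hs₂p] at e₂' e₃' e₄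
  linear_combination q * (p + q) * e₃ + q * (p - 1) * e₃' + (p + q) * e₂ + (q - 1) * e₂'
    + (p - 1) * (p + q - 1) * e₄ + q * (p - 1) * e₁' + (1 + q) * e₁

theorem braid (h₁ : IsDeformedReflection s₁ p T₁) (h₂ : IsDeformedReflection s₂ q T₂)
    (hp : IsLeftRegular p) (hq : IsLeftRegular q) (hpq : IsLeftRegular (p + q))
    (hs₁ : ∀ x, s₁ (s₁ x) = x) (hs₂ : ∀ x, s₂ (s₂ x) = x) (hs₁p : s₁ p = -p) (hs₂q : s₂ q = -q)
    (hs₁q : s₁ q = p + q) (hs₂p : s₂ p = p + q) (hs : ∀ x, s₁ (s₂ (s₁ x)) = s₂ (s₁ (s₂ x)))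
    (f : A) : T₁ (T₂ (T₁ f)) = T₂ (T₁ (T₂ f)) := by
  apply (hp.mul hq).mul hpq
  linear_combination h₁.mul_mul_mul_apply_apply_apply h₂ hp hs₁ hs₁p hs₁q hs₂p f
    - h₂.mul_mul_mul_apply_apply_apply h₁ hq hs₂ hs₂q (hs₂p.trans (add_comm p q))
      (hs₁q.trans (add_comm p q)) f + (p - 1) * (q - 1) * (p + q - 1) * hs f

end IsDeformedReflection

end DeformedReflection

section DeformedSwap

variable {k ι : Type*} [CommRing k] [DecidableEq ι]

theorem isLeftRegular_X_sub_X {a b : ι} (hab : a ≠ b) :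
    IsLeftRegular (X a - X b : MvPolynomial ι k) := by
  -- The invertible substitution `X a ↦ X a + X b` sends `X a - X b` to the regular element `X a`.
  let shift (c : MvPolynomial ι k) : MvPolynomial ι k →ₐ[k] MvPolynomial ι k :=
    aeval (Function.update X a (X a + c))
  have hshift : (shift (-X b)).comp (shift (X b)) = AlgHom.id k _ := by
    refine algHom_ext fun i => ?_
    by_cases hi : i = a
    · subst hi; simp [shift, Function.update_of_ne hab.symm]
    · simp [shift, Function.update_of_ne hi]
  have hinj : Function.Injective (shift (X b)) :=
    Function.LeftInverse.injective (g := shift (-X b)) fun x => by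
      rw [← AlgHom.comp_apply, hshift, AlgHom.id_apply]
  intro f g hfg
  apply hinj
  apply (isRegular_X (n := a)).left
  simpa [shift, Function.update_of_ne hab.symm] using congrArg (shift (X b)) hfg

theorem rename_swap_rename_swap (a b : ι) (f : MvPolynomial ι k) :
    rename (Equiv.swap a b) (rename (Equiv.swap a b) f) = f := by
  rw [rename_rename, ← Equiv.coe_trans, Equiv.swap_swap, Equiv.coe_refl, rename_id_apply]

theorem rename_swap_comm {a b c d : ι} (h : [a, b, c, d].Nodup) (f : MvPolynomial ι k) :
    rename (Equiv.swap a b) (rename (Equiv.swap c d) f) =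
      rename (Equiv.swap c d) (rename (Equiv.swap a b) f) := by
  rw [rename_rename, rename_rename, ← Equiv.Perm.coe_mul, ← Equiv.Perm.coe_mul,
    (Equiv.Perm.disjoint_swap_swap h).commute.eq]

theorem rename_swap_braid {a b c : ι} (hab : a ≠ b) (hac : a ≠ c) (hbc : b ≠ c)
    (f : MvPolynomial ι k) :
    rename (Equiv.swap a b) (rename (Equiv.swap b c) (rename (Equiv.swap a b) f)) =
      rename (Equiv.swap b c) (rename (Equiv.swap a b) (rename (Equiv.swap b c) f)) := by
  have hswap : Equiv.swap a b * Equiv.swap b c * Equiv.swap a b =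
      Equiv.swap b c * Equiv.swap a b * Equiv.swap b c := by
    rw [Equiv.swap_comm a b, Equiv.swap_comm b c, Equiv.swap_mul_swap_mul_swap hbc.symm hac.symm,
      Equiv.swap_comm b a, Equiv.swap_comm c b, Equiv.swap_mul_swap_mul_swap hab hac,
      Equiv.swap_comm]
  simpa [rename_rename, Function.comp_assoc] using
    congrArg (fun σ : Equiv.Perm ι => rename σ f) hswap

variable (k) in
def IsDeformedSwap (a b : ι) (T : MvPolynomial ι k → MvPolynomial ι k) : Prop :=
  IsDeformedReflection (rename (Equiv.swap a b)).toRingHom (X a - X b) T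

namespace IsDeformedSwap

variable {a b c d : ι} {T T₁ T₂ : MvPolynomial ι k → MvPolynomial ι k}

theorem apply_apply (h : IsDeformedSwap k a b T) (hab : a ≠ b) (f : MvPolynomial ι k) :
    T (T f) = f :=
  IsDeformedReflection.apply_apply h (isLeftRegular_X_sub_X hab) (rename_swap_rename_swap a b)
    (by simp) f

theorem commute (h₁ : IsDeformedSwap k a b T₁) (h₂ : IsDeformedSwap k c d T₂)
    (h : [a, b, c, d].Nodup) (f : MvPolynomial ι k) : T₁ (T₂ f) = T₂ (T₁ f) := by
  have h' := h
  simp only [List.nodup_cons, List.mem_cons, List.not_mem_nil, List.nodup_nil, or_false, not_or,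
    not_false_eq_true, and_true] at h'
  obtain ⟨⟨hab, hac, had⟩, ⟨hbc, hbd⟩, hcd⟩ := h'
  refine IsDeformedReflection.commute h₁ h₂ (isLeftRegular_X_sub_X hab)
    (isLeftRegular_X_sub_X hcd) (rename_swap_comm h) ?_ ?_ f
  · simp [Equiv.swap_apply_of_ne_of_ne (Ne.symm hac) (Ne.symm hbc),
      Equiv.swap_apply_of_ne_of_ne (Ne.symm had) (Ne.symm hbd)]
  · simp [Equiv.swap_apply_of_ne_of_ne hac had, Equiv.swap_apply_of_ne_of_ne hbc hbd]

theorem braid (h₁ : IsDeformedSwap k a b T₁) (h₂ : IsDeformedSwap k b c T₂) (hab : a ≠ b)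
    (hac : a ≠ c) (hbc : b ≠ c) (f : MvPolynomial ι k) :
    T₁ (T₂ (T₁ f)) = T₂ (T₁ (T₂ f)) := by
  refine IsDeformedReflection.braid h₁ h₂ (isLeftRegular_X_sub_X hab) (isLeftRegular_X_sub_X hbc)
    (by simpa using isLeftRegular_X_sub_X hac) (rename_swap_rename_swap a b)
    (rename_swap_rename_swap b c) (by simp) (by simp) ?_ ?_ (rename_swap_braid hab hac hbc) f
  · simp [Equiv.swap_apply_of_ne_of_ne (Ne.symm hac) (Ne.symm hbc)]
  · simp [Equiv.swap_apply_of_ne_of_ne hab hac]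

end IsDeformedSwap

end DeformedSwap

/-- The operators `σᵢ(f) = sᵢ(f) + ∂ᵢ(f)` on `k[x₁,…,x_r]` — characterized below by
`(xᵢ - x_{i+1})·(σᵢ f - sᵢ f) = f - sᵢ f`, where `sᵢ` swaps `xᵢ` and `x_{i+1}` — satisfy
the Coxeter relations of the symmetric group: `σᵢ² = id`, the braid relation
`σᵢ σ_{i+1} σᵢ = σ_{i+1} σᵢ σ_{i+1}`, and `σᵢ σⱼ = σⱼ σᵢ` for `|i - j| > 1`. -/
theorem deformed_action_coxeter_relations {k : Type*} [CommRing k] (r : ℕ)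
    (σ : ℕ → MvPolynomial (Fin r) k → MvPolynomial (Fin r) k)
    (hσ : ∀ (i : ℕ) (hi : i + 1 < r) (f : MvPolynomial (Fin r) k),
      (X (⟨i, Nat.lt_of_succ_lt hi⟩ : Fin r) - X (⟨i + 1, hi⟩ : Fin r)) *
          (σ i f -
            rename (Equiv.swap (⟨i, Nat.lt_of_succ_lt hi⟩ : Fin r) (⟨i + 1, hi⟩ : Fin r)) f) =
        f - rename (Equiv.swap (⟨i, Nat.lt_of_succ_lt hi⟩ : Fin r) (⟨i + 1, hi⟩ : Fin r)) f) :
    (∀ (i : ℕ), i + 1 < r → ∀ f, σ i (σ i f) = f) ∧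
    (∀ (i : ℕ), i + 2 < r → ∀ f, σ i (σ (i + 1) (σ i f)) = σ (i + 1) (σ i (σ (i + 1) f))) ∧
    (∀ (i j : ℕ), i + 1 < r → j + 1 < r → i + 1 < j → ∀ f, σ i (σ j f) = σ j (σ i f)) := by
  have hσ' : ∀ i (hi : i + 1 < r),
      IsDeformedSwap k (⟨i, Nat.lt_of_succ_lt hi⟩ : Fin r) ⟨i + 1, hi⟩ (σ i) := hσ
  have hne {m n : ℕ} {hm : m < r} {hn : n < r} (h : m ≠ n) : (⟨m, hm⟩ : Fin r) ≠ ⟨n, hn⟩ :=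
    Fin.ne_of_val_ne h
  refine ⟨fun i hi f => (hσ' i hi).apply_apply (hne (by omega)) f,
    fun i hi f => (hσ' i (by omega)).braid (hσ' (i + 1) hi) (hne (by omega))
      (hne (by omega)) (hne (by omega)) f,
    fun i j hi hj hij f => (hσ' i hi).commute (hσ' j hj) ?_ f⟩
  simp only [List.nodup_cons, List.mem_cons, List.not_mem_nil, List.nodup_nil, Fin.ext_iff, or_false,
    not_or, not_false_eq_true, and_true]
  omega
end

section
/- For r ≥ 1, the identity 1 + (1 + s₁ + s₂s₁ + ⋯ + s_{r-1}⋯s₂s₁) ⋄ (1/(u - x₁)) = ∏_{i=1}^{r} (u+1-x_i)/(u-x_i) holds, where ⋄ denotes the deformed action of the symmetric group S_r on rational functions given on generators by s_i ⋄ f = s_i(f) + (f - s_i(f))/(x_i - x_{i+1}). -/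
open MvPolynomial

/-!
Put `t i = (u - xᵢ)⁻¹`, so that `(u + 1 - xᵢ)/(u - xᵢ) = 1 + t i`, and `Pⱼ = ∏_{i ≤ j} (1 + t i)`.
By induction, `(s_j ⋯ s₁) ⋄ (u - x₁)⁻¹ = Pⱼ · t (j + 1)`: the swap `s_{j+1}` fixes `u` and `Pⱼ`,
and the divided difference of `c (u - a)⁻¹` in `a ↔ b` is `c (u - a)⁻¹ (u - b)⁻¹`, which
contributes exactly the new factor `1 + t (j + 1)`. The sum `1 + ∑ⱼ Pⱼ t (j + 1)` then
telescopes to `P_r`, since `P_{j+1} - Pⱼ = Pⱼ t (j + 1)`.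
-/

section Telescoping

variable {R : Type*} [CommRing R]

theorem one_add_sum_prod_Icc_mul_eq_prod_Icc (t : ℕ → R) (m : ℕ) :
    1 + ∑ j ∈ Finset.range m, (∏ i ∈ Finset.Icc 1 j, (1 + t i)) * t (j + 1) =
      ∏ i ∈ Finset.Icc 1 m, (1 + t i) := by
  induction m with
  | zero => simp
  | succ m ih =>
    rw [Finset.sum_range_succ, ← add_assoc, ih, Finset.prod_Icc_succ_top (by omega)]
    ring

end Telescoping

section DeformedSwap

variable {K : Type*} [Field K]

/-- `s ⋄ g` for a transposition `s` that acts on `K` by `τ` and exchanges `a` and `b`. -/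
def deformedSwap (τ : K →+* K) (a b g : K) : K :=
  τ g + (g - τ g) / (a - b)

theorem deformedSwap_mul_inv_sub (τ : K →+* K) {a b c u : K} (hc : τ c = c) (hu : τ u = u)
    (ha : τ a = b) (hab : a ≠ b) (hua : u ≠ a) (hub : u ≠ b) :
    deformedSwap τ a b (c * (u - a)⁻¹) = c * (1 + (u - a)⁻¹) * (u - b)⁻¹ := by
  have hab' : a - b ≠ 0 := sub_ne_zero.mpr hab
  have hua' : u - a ≠ 0 := sub_ne_zero.mpr hua
  have hub' : u - b ≠ 0 := sub_ne_zero.mpr hub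
  simp only [deformedSwap, map_mul, map_inv₀, map_sub, hc, hu, ha]
  field_simp
  ring

/-- `(s_j ⋯ s₁) ⋄ (u - x₁)⁻¹` in closed form, with `u = x 0`. -/
theorem deformedSwap_iterate_eq_prod_mul_inv (r : ℕ) (x : ℕ → K) (hx : Function.Injective x)
    (τ : ℕ → (K →+* K))
    (hτ : ∀ i, 1 ≤ i → i + 1 ≤ r → ∀ k, τ i (x k) = x (Equiv.swap i (i + 1) k))
    (W : ℕ → K) (hW0 : W 0 = (x 0 - x 1)⁻¹)
    (hW : ∀ j, 1 ≤ j → j ≤ r - 1 → W j = deformedSwap (τ j) (x j) (x (j + 1)) (W (j - 1))) :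
    ∀ j, j + 1 ≤ r → W j = (∏ i ∈ Finset.Icc 1 j, (1 + (x 0 - x i)⁻¹)) * (x 0 - x (j + 1))⁻¹ := by
  have hτ_fix : ∀ i, 1 ≤ i → i + 1 ≤ r → ∀ k, k ≠ i → k ≠ i + 1 → τ i (x k) = x k :=
    fun i hi hir k hki hki' => by rw [hτ i hi hir, Equiv.swap_apply_of_ne_of_ne hki hki']
  intro j
  induction j with
  | zero => simp [hW0]
  | succ n ih =>
    intro hnr
    have hτ0 : τ (n + 1) (x 0) = x 0 := hτ_fix _ (by omega) hnr 0 (by omega) (by omega)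
    have hτP : τ (n + 1) (∏ i ∈ Finset.Icc 1 n, (1 + (x 0 - x i)⁻¹)) =
        ∏ i ∈ Finset.Icc 1 n, (1 + (x 0 - x i)⁻¹) := by
      rw [map_prod]
      refine Finset.prod_congr rfl fun i hi => ?_
      have hi := Finset.mem_Icc.mp hi
      simp only [map_add, map_one, map_inv₀, map_sub, hτ0,
        hτ_fix _ (by omega) hnr i (by omega) (by omega)]
    rw [hW (n + 1) (by omega) (by omega), Nat.add_sub_cancel, ih (by omega),
      deformedSwap_mul_inv_sub _ hτP hτ0 (by simp [hτ _ (by omega) hnr])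
        (hx.ne (by omega)) (hx.ne (by omega)) (hx.ne (by omega)),
      Finset.prod_Icc_succ_top (by omega)]

end DeformedSwap

theorem deformed_action_telescoping_general (r : ℕ)
    (K : Type*) [Field K] [Algebra (MvPolynomial ℕ ℚ) K]
    [IsFractionRing (MvPolynomial ℕ ℚ) K]
    (τ : ℕ → (K →+* K))
    (hτ : ∀ i : ℕ, 1 ≤ i → i + 1 ≤ r → ∀ p : MvPolynomial ℕ ℚ,
      τ i (algebraMap (MvPolynomial ℕ ℚ) K p) =
        algebraMap (MvPolynomial ℕ ℚ) K (rename (Equiv.swap i (i + 1)) p))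
    (σ : ℕ → K → K)
    (hσ : ∀ i : ℕ, 1 ≤ i → i + 1 ≤ r → ∀ g : K,
      σ i g = τ i g + (g - τ i g) /
        (algebraMap (MvPolynomial ℕ ℚ) K (X i) - algebraMap (MvPolynomial ℕ ℚ) K (X (i + 1))))
    (W : ℕ → K)
    (hW0 : W 0 = (algebraMap (MvPolynomial ℕ ℚ) K (X 0) -
      algebraMap (MvPolynomial ℕ ℚ) K (X 1))⁻¹)
    (hW : ∀ j : ℕ, 1 ≤ j → j ≤ r - 1 → W j = σ j (W (j - 1))) :
    1 + ∑ j ∈ Finset.range r, W j =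
      ∏ i ∈ Finset.Icc 1 r,
        (algebraMap (MvPolynomial ℕ ℚ) K (X 0) + 1 - algebraMap (MvPolynomial ℕ ℚ) K (X i)) /
          (algebraMap (MvPolynomial ℕ ℚ) K (X 0) - algebraMap (MvPolynomial ℕ ℚ) K (X i)) := by
  set x : ℕ → K := fun i => algebraMap (MvPolynomial ℕ ℚ) K (X i)
  have hx : Function.Injective x :=
    (IsFractionRing.injective (MvPolynomial ℕ ℚ) K).comp (X_injective (R := ℚ))
  have hW_closed := deformedSwap_iterate_eq_prod_mul_inv r x hx τ
    (fun i hi hir k => by simp only [x, hτ i hi hir, rename_X]) W hW0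
    (fun j hj hjr => by rw [hW j hj hjr, hσ j hj (by omega)]; rfl)
  have hfactor : ∀ i ∈ Finset.Icc 1 r, (x 0 + 1 - x i) / (x 0 - x i) = 1 + (x 0 - x i)⁻¹ :=
    fun i hi => by
      have : x 0 - x i ≠ 0 := sub_ne_zero.mpr (hx.ne (by grind))
      field_simp
      ring
  rw [Finset.prod_congr rfl hfactor, ← one_add_sum_prod_Icc_mul_eq_prod_Icc,
    Finset.sum_congr rfl fun j hj => hW_closed j (by grind)]

/-- For `r ≥ 1`, the identity
`1 + (1 + s₁ + s₂s₁ + ⋯ + s_{r-1}⋯s₂s₁) ⋄ (1/(u - x₁)) = ∏_{i=1}^r (u+1-x_i)/(u-x_i)`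
holds in the field of rational functions `K = Frac(ℚ[x₀, x₁, x₂, …])`, where `x₀` plays the
role of `u`, the deformed action on `K` is `σᵢ g = τᵢ g + (g - τᵢ g)/(xᵢ - x_{i+1})` with
`τᵢ` the field automorphism swapping `xᵢ` and `x_{i+1}`, and `W j = (s_j ⋯ s₁) ⋄ (1/(u - x₁))`
is defined recursively by `W 0 = 1/(u - x₁)`, `W j = σ_j (W (j-1))`. -/
theorem deformed_action_telescoping (r : ℕ) (hr : 1 ≤ r)
    (K : Type*) [Field K] [Algebra (MvPolynomial ℕ ℚ) K]
    [IsFractionRing (MvPolynomial ℕ ℚ) K]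
    (τ : ℕ → (K →+* K))
    (hτ : ∀ i : ℕ, 1 ≤ i → i + 1 ≤ r → ∀ p : MvPolynomial ℕ ℚ,
      τ i (algebraMap (MvPolynomial ℕ ℚ) K p) =
        algebraMap (MvPolynomial ℕ ℚ) K (rename (Equiv.swap i (i + 1)) p))
    (σ : ℕ → K → K)
    (hσ : ∀ i : ℕ, 1 ≤ i → i + 1 ≤ r → ∀ g : K,
      σ i g = τ i g + (g - τ i g) /
        (algebraMap (MvPolynomial ℕ ℚ) K (X i) - algebraMap (MvPolynomial ℕ ℚ) K (X (i + 1))))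
    (W : ℕ → K)
    (hW0 : W 0 = (algebraMap (MvPolynomial ℕ ℚ) K (X 0) -
      algebraMap (MvPolynomial ℕ ℚ) K (X 1))⁻¹)
    (hW : ∀ j : ℕ, 1 ≤ j → j ≤ r - 1 → W j = σ j (W (j - 1))) :
    1 + ∑ j ∈ Finset.range r, W j =
      ∏ i ∈ Finset.Icc 1 r,
        (algebraMap (MvPolynomial ℕ ℚ) K (X 0) + 1 - algebraMap (MvPolynomial ℕ ℚ) K (X i)) /
          (algebraMap (MvPolynomial ℕ ℚ) K (X 0) - algebraMap (MvPolynomial ℕ ℚ) K (X i)) :=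
  deformed_action_telescoping_general r K τ hτ σ hσ W hW0 hW
end
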